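/- arXiv:2208.07259 — 3 statements merged into one kernel-verified Lean document; each statement's English description precedes it below -/
import Mathlib

section
/- For a unit vector d ∈ ℝ³, radius ρ > 0, half-length η > 0, the Euclidean projection of r ∈ ℝ³ onto the cylinder H = {x : ‖x - ⟨d,x⟩d‖ ≤ ρ, |⟨d,x⟩| ≤ η} is given by Π_H(r) = clamp(⟨d,r⟩, -η, η)·d + (ρ / max(‖r_b‖, ρ))·r_b, where r_b = r - ⟨d,r⟩·d. That is, this point lies in H and minimizes the distance to r among all points of H. -/
open scoped InnerProductSpace

private lemma pyth_cyl {E : Type*} [NormedAddCommGroup E] [InnerProductSpace ℝ E]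
    (d w : E) (hd : ‖d‖ = 1) (hw : ⟪d, w⟫_ℝ = 0) (α : ℝ) :
    ‖α • d + w‖ ^ 2 = α ^ 2 + ‖w‖ ^ 2 := by
  have h2 : ⟪α • d, w⟫_ℝ = 0 := by
    rw [real_inner_smul_left, hw]; ring
  rw [norm_add_sq_real, h2, norm_smul, hd, Real.norm_eq_abs]
  rw [mul_one, sq_abs]; ring

set_option maxHeartbeats 1000000 in
/-- Explicit formula for the Euclidean projection onto a solid cylinder
centered at the origin with axis `d`, radius `ρ`, half-length `η`. -/
theorem cylinder_projection_formula
    (d : EuclideanSpace ℝ (Fin 3)) (hd : ‖d‖ = 1)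
    (ρ η : ℝ) (hρ : 0 < ρ) (hη : 0 < η)
    (r : EuclideanSpace ℝ (Fin 3)) :
    let H : Set (EuclideanSpace ℝ (Fin 3)) :=
      {x | ‖x - ⟪d, x⟫_ℝ • d‖ ≤ ρ ∧ |⟪d, x⟫_ℝ| ≤ η}
    let rb := r - ⟪d, r⟫_ℝ • d
    let p := (max (-η) (min η ⟪d, r⟫_ℝ)) • d + (ρ / max ‖rb‖ ρ) • rb
    p ∈ H ∧ ∀ y ∈ H, ‖r - p‖ ≤ ‖r - y‖ := by
  intro H rb p
  have hdd : ⟪d, d⟫_ℝ = 1 := by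
    rw [real_inner_self_eq_norm_sq, hd]; norm_num
  set t := ⟪d, r⟫_ℝ with ht
  have hdrb : ⟪d, rb⟫_ℝ = 0 := by
    simp only [rb, inner_sub_right, real_inner_smul_right, hdd, ← ht]
    ring
  set M := max ‖rb‖ ρ with hM
  have hM0 : 0 < M := lt_max_of_lt_right hρ
  set lam := ρ / M with hlam
  have hlam0 : 0 < lam := div_pos hρ hM0
  have hlam1 : lam ≤ 1 := div_le_one_of_le₀ (le_max_right _ _) hM0.le
  set c := max (-η) (min η t) with hc
  have hc1 : -η ≤ c := le_max_left _ _
  have hc2 : c ≤ η := max_le (by linarith) (min_le_left _ _)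
  have hdp : ⟪d, p⟫_ℝ = c := by
    simp only [p, inner_add_right, real_inner_smul_right, hdd, hdrb, ← hc]
    ring
  have hrad : lam * ‖rb‖ ≤ ρ := by
    rw [hlam, div_mul_eq_mul_div, div_le_iff₀ hM0]
    exact mul_le_mul_of_nonneg_left (le_max_left _ _) hρ.le
  refine ⟨⟨?_, ?_⟩, ?_⟩
  · have hpc : p - ⟪d, p⟫_ℝ • d = lam • rb := by
      rw [hdp]; show c • d + lam • rb - c • d = lam • rb; abel
    rw [hpc, norm_smul, Real.norm_eq_abs, abs_of_pos hlam0]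
    exact hrad
  · rw [hdp]; exact abs_le.mpr ⟨hc1, hc2⟩
  · intro y hy
    set s := ⟪d, y⟫_ℝ with hs
    set yb := y - s • d with hyb
    have hdyb : ⟪d, yb⟫_ℝ = 0 := by
      simp only [hyb, inner_sub_right, real_inner_smul_right, hdd, ← hs]
      ring
    obtain ⟨hy1, hy2⟩ := hy
    have hs1 : -η ≤ s := (abs_le.mp hy2).1
    have hs2 : s ≤ η := (abs_le.mp hy2).2
    have hrp : r - p = (t - c) • d + ((1 - lam) • rb) := by
      have : r = t • d + rb := by show r = t • d + (r - t • d); abel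
      rw [this]; show t • d + rb - (c • d + lam • rb) = _
      module
    have hry : r - y = (t - s) • d + (rb - yb) := by
      have hr : r = t • d + rb := by show r = t • d + (r - t • d); abel
      have hyy : y = s • d + yb := by show y = s • d + (y - s • d); abel
      rw [hr, hyy]; module
    have h1 : ‖r - p‖ ^ 2 = (t - c) ^ 2 + ((1 - lam) * ‖rb‖) ^ 2 := by
      rw [hrp, pyth_cyl d _ hd (by rw [real_inner_smul_right, hdrb]; ring) _,
        norm_smul, Real.norm_eq_abs, abs_of_nonneg (by linarith)]
    have h2 : ‖r - y‖ ^ 2 = (t - s) ^ 2 + ‖rb - yb‖ ^ 2 := by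
      rw [hry, pyth_cyl d _ hd (by rw [inner_sub_right, hdrb, hdyb]; ring) _]
    have haxial : (t - c) ^ 2 ≤ (t - s) ^ 2 := by
      rcases le_total t (-η) with h | h
      · have hceq : c = -η := by
          rw [hc, max_eq_left (le_trans (min_le_right η t) h)]
        rw [hceq]; nlinarith
      · rcases le_total η t with h' | h'
        · have hceq : c = η := by
            rw [hc, min_eq_left h', max_eq_right (by linarith)]
          rw [hceq]; nlinarith
        · have hceq : c = t := by
            rw [hc, min_eq_right h', max_eq_right h]
          have h0 : (t - c) ^ 2 = 0 := by rw [hceq]; ring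
          linarith [sq_nonneg (t - s)]
    have hradineq : (1 - lam) * ‖rb‖ ≤ ‖rb - yb‖ := by
      rcases le_total ‖rb‖ ρ with h | h
      · have : M = ρ := max_eq_right h
        have : lam = 1 := by rw [hlam, this, div_self hρ.ne']
        rw [this, sub_self, zero_mul]; exact norm_nonneg _
      · have hMe : M = ‖rb‖ := max_eq_left h
        have hlame : lam * ‖rb‖ = ρ := by
          rw [hlam, hMe, div_mul_cancel₀]
          exact (lt_of_lt_of_le hρ h).ne'
        have := norm_sub_norm_le rb yb
        nlinarith [hy1]
    have hsq : ‖r - p‖ ^ 2 ≤ ‖r - y‖ ^ 2 := by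
      rw [h1, h2]
      have hnn : 0 ≤ (1 - lam) * ‖rb‖ := mul_nonneg (by linarith) (norm_nonneg _)
      nlinarith [hradineq, hnn]
    nlinarith [norm_nonneg (r - p), norm_nonneg (r - y), hsq]
end

section
/- Let K = {u ∈ ℝⁿ : cos(θ)·‖u‖ ≤ uₙ} be an icecream cone with θ ∈ (0, π/2) and let B = {u : ‖u‖ ≤ γ̄}. Then for every u ∈ ℝⁿ, Π_{K∩B}(u) = Π_B(Π_K(u)), i.e., the projection onto the intersection equals the projection onto the cone followed by the projection onto the ball. -/
open RealInnerProductSpace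

/-- `p` is the Euclidean projection of `x` onto `S`. -/
def IsEuclideanProj {E : Type*} [NormedAddCommGroup E]
    (S : Set E) (x p : E) : Prop :=
  p ∈ S ∧ ∀ y ∈ S, ‖x - p‖ ≤ ‖x - y‖

section Helpers

variable {E : Type*} [NormedAddCommGroup E] [InnerProductSpace ℝ E]

lemma isProj_of_inner {S : Set E} {x p : E} (hp : p ∈ S)
    (h : ∀ y ∈ S, ⟪x - p, y - p⟫ ≤ 0) : IsEuclideanProj S x p := by
  refine ⟨hp, fun y hy => ?_⟩
  have key : ‖x - p‖ ^ 2 ≤ ‖x - y‖ ^ 2 := by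
    have h1 : x - y = (x - p) - (y - p) := by abel
    have h2 := norm_sub_sq_real (x - p) (y - p)
    have := h y hy
    nlinarith [sq_nonneg ‖y - p‖, h1 ▸ h2]
  exact (pow_le_pow_iff_left₀ (norm_nonneg _) (norm_nonneg _) two_ne_zero).mp key

lemma inner_le_of_isProj {S : Set E} (hS : Convex ℝ S) {x p : E}
    (h : IsEuclideanProj S x p) : ∀ y ∈ S, ⟪x - p, y - p⟫ ≤ 0 := by
  have hinf : ‖x - p‖ = ⨅ w : S, ‖x - w‖ := by
    have : Nonempty S := ⟨⟨p, h.1⟩⟩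
    refine le_antisymm (le_ciInf fun w => h.2 w w.2) ?_
    exact ciInf_le ⟨0, fun r ⟨w, hw⟩ => hw ▸ norm_nonneg _⟩ (⟨p, h.1⟩ : S)
  exact (norm_eq_iInf_iff_real_inner_le_zero hS h.1).mp hinf

lemma isProj_unique {S : Set E} (hS : Convex ℝ S) {x p q : E}
    (hp : IsEuclideanProj S x p) (hq : IsEuclideanProj S x q) : p = q := by
  have h1 := inner_le_of_isProj hS hp q hq.1
  have h2 := inner_le_of_isProj hS hq p hp.1
  have hqp : ⟪q - p, q - p⟫ ≤ 0 := by
    have e : ⟪x - p, q - p⟫ - ⟪x - q, q - p⟫ = ⟪q - p, q - p⟫ := by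
      rw [← inner_sub_left]; congr 1; abel
    have h2' : 0 ≤ ⟪x - q, q - p⟫ := by
      have hpq : p - q = -(q - p) := by abel
      rw [hpq, inner_neg_right] at h2; linarith
    linarith
  have hsq : ‖q - p‖ ^ 2 ≤ 0 := by rwa [← real_inner_self_eq_norm_sq]
  have hz : q - p = 0 := by
    have := norm_nonneg (q - p)
    have hn : ‖q - p‖ = 0 := by nlinarith
    exact norm_eq_zero.mp hn
  exact (sub_eq_zero.mp hz).symm

end Helpers

/-- Projecting onto the intersection of an icecream cone and a centered ball equals
projecting onto the cone and then onto the ball: `Π_{K∩B}(u) = Π_B(Π_K(u))`. -/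
theorem proj_cone_inter_ball (n : ℕ) (θ : ℝ) (hθ : θ ∈ Set.Ioo 0 (Real.pi / 2))
    (γ : ℝ) (hγ : 0 < γ) :
    let K : Set (EuclideanSpace ℝ (Fin (n + 1))) :=
      {u | Real.cos θ * ‖u‖ ≤ u (Fin.last n)}
    let B : Set (EuclideanSpace ℝ (Fin (n + 1))) := {u | ‖u‖ ≤ γ}
    ∀ u pK pB : EuclideanSpace ℝ (Fin (n + 1)),
      IsEuclideanProj K u pK →
      IsEuclideanProj B pK pB →
      IsEuclideanProj (K ∩ B) u pB := by
  intro K B u pK pB hK hB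
  have hcos : 0 < Real.cos θ := by
    apply Real.cos_pos_of_mem_Ioo
    constructor
    · linarith [hθ.1, Real.pi_pos]
    · exact hθ.2
  -- K is convex
  have hKconv : Convex ℝ K := by
    intro x hx y hy a b ha hb hab
    simp only [K, Set.mem_setOf_eq] at hx hy ⊢
    have happ : (a • x + b • y) (Fin.last n)
        = a * x (Fin.last n) + b * y (Fin.last n) := by
      simp [PiLp.add_apply, PiLp.smul_apply, smul_eq_mul]
    rw [happ]
    have hn : ‖a • x + b • y‖ ≤ a * ‖x‖ + b * ‖y‖ := by
      calc ‖a • x + b • y‖ ≤ ‖a • x‖ + ‖b • y‖ := norm_add_le _ _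
        _ = a * ‖x‖ + b * ‖y‖ := by
            rw [norm_smul, norm_smul, Real.norm_eq_abs, Real.norm_eq_abs,
              abs_of_nonneg ha, abs_of_nonneg hb]
    nlinarith [mul_le_mul_of_nonneg_left hx ha, mul_le_mul_of_nonneg_left hy hb,
      mul_le_mul_of_nonneg_left hn hcos.le]
  -- K is a cone
  have hKcone : ∀ (c : ℝ), 0 ≤ c → ∀ v ∈ K, c • v ∈ K := by
    intro c hc v hv
    simp only [K, Set.mem_setOf_eq] at hv ⊢
    have happ : (c • v) (Fin.last n) = c * v (Fin.last n) := by
      simp [PiLp.smul_apply, smul_eq_mul]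
    rw [happ, norm_smul, Real.norm_eq_abs, abs_of_nonneg hc]
    nlinarith [mul_le_mul_of_nonneg_left hv hc]
  have h0K : (0 : EuclideanSpace ℝ (Fin (n + 1))) ∈ K := by
    simp [K, Set.mem_setOf_eq]
  -- B is convex
  have hBconv : Convex ℝ B := by
    have hBeq : B = Metric.closedBall 0 γ := by
      ext v; simp [B, Metric.mem_closedBall, dist_zero_right]
    rw [hBeq]; exact convex_closedBall 0 γ
  have hKin := inner_le_of_isProj hKconv hK
  have hBin := inner_le_of_isProj hBconv hB
  -- orthogonality ⟪u - pK, pK⟫ = 0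
  have horth : ⟪u - pK, pK⟫ = 0 := by
    have h1 := hKin 0 h0K
    rw [zero_sub, inner_neg_right] at h1
    have h2 := hKin ((2 : ℝ) • pK) (hKcone 2 (by norm_num) pK hK.1)
    have e : (2 : ℝ) • pK - pK = pK := by
      rw [two_smul]; abel
    rw [e] at h2
    linarith
  -- pB = t • pK with t ∈ [0,1]
  obtain ⟨t, ht0, ht1, hpBt⟩ : ∃ t : ℝ, 0 ≤ t ∧ t ≤ 1 ∧ pB = t • pK := by
    by_cases hle : ‖pK‖ ≤ γ
    · refine ⟨1, zero_le_one, le_refl 1, ?_⟩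
      have hmem : pK ∈ B := hle
      have := hB.2 pK hmem
      rw [sub_self, norm_zero] at this
      have hz : pK - pB = 0 := norm_le_zero_iff.mp this
      rw [one_smul]
      have := sub_eq_zero.mp hz
      exact this.symm
    · push_neg at hle
      have hpK0 : 0 < ‖pK‖ := lt_trans hγ hle
      set t := γ / ‖pK‖ with htdef
      have ht0 : 0 < t := div_pos hγ hpK0
      have ht1 : t ≤ 1 := by
        rw [div_le_one hpK0]; exact hle.le
      refine ⟨t, ht0.le, ht1, ?_⟩
      have hq : IsEuclideanProj B pK (t • pK) := by
        apply isProj_of_inner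
        · show ‖t • pK‖ ≤ γ
          rw [norm_smul, Real.norm_eq_abs, abs_of_nonneg ht0.le, htdef,
            div_mul_cancel₀ _ hpK0.ne']
        · intro y hy
          have hsub : pK - t • pK = (1 - t) • pK := by
            rw [sub_smul, one_smul]
          rw [hsub, real_inner_smul_left]
          apply mul_nonpos_of_nonneg_of_nonpos (by linarith)
          rw [inner_sub_right, real_inner_smul_right, real_inner_self_eq_norm_sq]
          have hiy : ⟪pK, y⟫ ≤ ‖pK‖ * γ := by
            calc ⟪pK, y⟫ ≤ ‖pK‖ * ‖y‖ := real_inner_le_norm pK y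
              _ ≤ ‖pK‖ * γ := mul_le_mul_of_nonneg_left hy hpK0.le
          have : t * ‖pK‖ ^ 2 = γ * ‖pK‖ := by
            rw [htdef]; field_simp
          nlinarith
      exact isProj_unique hBconv hB hq
  have hpBK : pB ∈ K := hpBt ▸ hKcone t ht0 pK hK.1
  apply isProj_of_inner (Set.mem_inter hpBK hB.1)
  rintro y ⟨hyK, hyB⟩
  have decomp : ⟪u - pB, y - pB⟫
      = ⟪u - pK, y - pK⟫ + ⟪u - pK, pK - pB⟫ + ⟪pK - pB, y - pB⟫ := by
    simp only [inner_sub_left, inner_sub_right]; ring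
  have hT1 : ⟪u - pK, y - pK⟫ ≤ 0 := hKin y hyK
  have hT3 : ⟪pK - pB, y - pB⟫ ≤ 0 := hBin y hyB
  have hT2 : ⟪u - pK, pK - pB⟫ = 0 := by
    have hsub : pK - pB = (1 - t) • pK := by
      rw [hpBt, sub_smul, one_smul]
    rw [hsub, real_inner_smul_right, horth, mul_zero]
  rw [decomp]; linarith
end

section
/- Let K = {u ∈ ℝ³ : cos(λ)·‖u‖ ≤ u₃} with λ ∈ (0, π/2). For u ∈ ℝ³ with (u₁,u₂) ≠ (0,0), the projection of u onto K is: u itself if cos(λ)‖u‖ ≤ u₃; the zero vector if sin(λ)‖u‖ ≤ -u₃; and otherwise ⟨u, u_b⟩·u_b where u_b = (sin(λ)/√(u₁²+u₂²))·(u₁, u₂, 0) + (0, 0, cos(λ)). -/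
/-!
Let `e` be the unit axis, `c = cos λ`, `s = sin λ`. The cone `{w | s‖w‖ ≤ -⟪e, w⟫}` lies in the
polar of `K`: splitting `w = a e + w'`, `y = b e + y'` along the axis, `⟪w, y⟫ = ab + ⟪w', y'⟫ ≤
-sc‖w‖‖y‖ + cs‖w‖‖y‖ = 0`. So `p` is the projection of `u` as soon as `p ∈ K`, `u - p ⊥ p` and
`u - p` lies in that cone. For `u = a e + v` in neither cone, `u_b = (s/‖v‖) v + c e` is a unit
vector with `⟪u, u_b⟫ = s‖v‖ + ca > 0`, and `p = ⟪u, u_b⟫ u_b` leaves the residual `u - p` of norm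
`α = c‖v‖ - sa > 0` with `⟪e, u - p⟫ = -sα`, i.e. on the boundary of the polar cone.
-/

open scoped InnerProductSpace

lemma IsEuclideanProj.of_mem {E : Type*} [NormedAddCommGroup E] {S : Set E} {x : E}
    (hx : x ∈ S) : IsEuclideanProj S x x :=
  ⟨hx, fun y _ => by simp⟩

section
variable {E : Type*} [NormedAddCommGroup E] [InnerProductSpace ℝ E]

lemma isEuclideanProj_of_inner_eq_zero_of_inner_nonpos {S : Set E} {x p : E} (hp : p ∈ S)
    (horth : ⟪x - p, p⟫_ℝ = 0) (hpolar : ∀ y ∈ S, ⟪x - p, y⟫_ℝ ≤ 0) :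
    IsEuclideanProj S x p := by
  refine ⟨hp, fun y hy => ?_⟩
  have hvar : ⟪x - p, y - p⟫_ℝ ≤ 0 := by
    rw [inner_sub_right, horth, sub_zero]; exact hpolar y hy
  have hexp : ‖x - y‖ ^ 2 = ‖x - p‖ ^ 2 - 2 * ⟪x - p, y - p⟫_ℝ + ‖y - p‖ ^ 2 := by
    rw [← norm_sub_sq_real, sub_sub_sub_cancel_right]
  exact (pow_le_pow_iff_left₀ (norm_nonneg _) (norm_nonneg _) two_ne_zero).mp
    (by nlinarith [sq_nonneg ‖y - p‖])

lemma norm_sub_inner_smul_sq {e : E} (he : ‖e‖ = 1) (w : E) :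
    ‖w - ⟪e, w⟫_ℝ • e‖ ^ 2 = ‖w‖ ^ 2 - ⟪e, w⟫_ℝ ^ 2 := by
  rw [norm_sub_sq_real, norm_smul, real_inner_smul_right, real_inner_comm, Real.norm_eq_abs,
    mul_pow, sq_abs, he]
  ring

lemma inner_sub_inner_smul_eq_zero {e : E} (he : ‖e‖ = 1) (w : E) :
    ⟪e, w - ⟪e, w⟫_ℝ • e⟫_ℝ = 0 := by
  rw [inner_sub_right, real_inner_smul_right, real_inner_self_eq_norm_sq, he]
  ring

/-- With `c = cos λ`, the cone of half-angle `λ` about the unit vector `e`;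
`circularCone (-e) (sin λ)` lies in its polar cone. -/
def circularCone (e : E) (c : ℝ) : Set E := {w | c * ‖w‖ ≤ ⟪e, w⟫_ℝ}

variable {e : E} {s c : ℝ}

lemma mem_circularCone_neg {w : E} : w ∈ circularCone (-e) s ↔ s * ‖w‖ ≤ -⟪e, w⟫_ℝ := by
  rw [circularCone, Set.mem_ofPred_eq, inner_neg_left]

lemma zero_mem_circularCone : (0 : E) ∈ circularCone e c := by
  simp [circularCone]

lemma inner_nonpos_of_mem_circularCone (he : ‖e‖ = 1) (hs : 0 ≤ s) (hc : 0 ≤ c)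
    (hsc : s ^ 2 + c ^ 2 = 1) {w y : E} (hw : w ∈ circularCone (-e) s)
    (hy : y ∈ circularCone e c) : ⟪w, y⟫_ℝ ≤ 0 := by
  rw [mem_circularCone_neg] at hw
  set a := ⟪e, w⟫_ℝ
  set b := ⟪e, y⟫_ℝ
  change c * ‖y‖ ≤ b at hy
  have hsplit : ⟪w, y⟫_ℝ = a * b + ⟪w - a • e, y - b • e⟫_ℝ := by
    simp only [inner_sub_left, inner_sub_right, real_inner_smul_left, real_inner_smul_right,
      real_inner_self_eq_norm_sq, he, real_inner_comm w e, a, b]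
    ring
  have hw' : ‖w - a • e‖ ≤ c * ‖w‖ := by
    refine (pow_le_pow_iff_left₀ (norm_nonneg _) (by positivity) two_ne_zero).mp ?_
    rw [norm_sub_inner_smul_sq he]
    nlinarith [mul_nonneg hs (norm_nonneg w)]
  have hy' : ‖y - b • e‖ ≤ s * ‖y‖ := by
    refine (pow_le_pow_iff_left₀ (norm_nonneg _) (by positivity) two_ne_zero).mp ?_
    rw [norm_sub_inner_smul_sq he]
    nlinarith [mul_nonneg hc (norm_nonneg y)]
  calc ⟪w, y⟫_ℝ ≤ a * b + ‖w - a • e‖ * ‖y - b • e‖ := by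
        rw [hsplit]; gcongr; exact real_inner_le_norm _ _
    _ ≤ -(s * ‖w‖) * (c * ‖y‖) + c * ‖w‖ * (s * ‖y‖) := by
        have hb : 0 ≤ b := le_trans (by positivity) hy
        nlinarith [mul_nonneg (neg_nonneg.mpr (sub_nonpos.mpr hw)) hb,
          mul_nonneg (mul_nonneg hs (norm_nonneg w)) (sub_nonneg.mpr hy),
          mul_le_mul hw' hy' (norm_nonneg _) (by positivity)]
    _ = 0 := by ring

lemma isEuclideanProj_circularCone_zero (he : ‖e‖ = 1) (hs : 0 ≤ s) (hc : 0 ≤ c)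
    (hsc : s ^ 2 + c ^ 2 = 1) {u : E} (hu : u ∈ circularCone (-e) s) :
    IsEuclideanProj (circularCone e c) u 0 :=
  isEuclideanProj_of_inner_eq_zero_of_inner_nonpos zero_mem_circularCone (by simp)
    fun _ hy => by simpa using inner_nonpos_of_mem_circularCone he hs hc hsc hu hy

/-- `(r, a)` are the radial and axial coordinates of a vector of norm `ρ`, whose angle from the axis
the hypotheses place strictly between `λ` and `λ + π/2`. -/
lemma rotated_coords_pos {r a ρ : ℝ} (hs : 0 < s) (hc : 0 < c) (hsc : s ^ 2 + c ^ 2 = 1)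
    (hr : 0 ≤ r) (hρ2 : ρ ^ 2 = r ^ 2 + a ^ 2) (h1 : a < c * ρ) (h2 : -a < s * ρ) :
    0 < c * r - s * a ∧ 0 < s * r + c * a := by
  constructor
  · by_contra! h
    have ha : 0 ≤ a := by nlinarith [mul_nonneg hc.le hr]
    have : (c * r) ^ 2 ≤ (s * a) ^ 2 := pow_le_pow_left₀ (by positivity) (by linarith) 2
    nlinarith
  · by_contra! h
    have ha : a ≤ 0 := by nlinarith [mul_nonneg hs.le hr]
    have : (s * r) ^ 2 ≤ (c * a) ^ 2 := by nlinarith [mul_nonneg hs.le hr]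
    nlinarith

lemma isEuclideanProj_circularCone_of_not_mem (he : ‖e‖ = 1) (hs : 0 < s) (hc : 0 < c)
    (hsc : s ^ 2 + c ^ 2 = 1) {u b : E} (h1 : u ∉ circularCone e c)
    (h2 : u ∉ circularCone (-e) s)
    (hb : b = (s / ‖u - ⟪e, u⟫_ℝ • e‖) • (u - ⟪e, u⟫_ℝ • e) + c • e) :
    IsEuclideanProj (circularCone e c) u (⟪u, b⟫_ℝ • b) := by
  rw [mem_circularCone_neg, not_le] at h2
  rw [circularCone, Set.mem_ofPred_eq, not_le] at h1
  set a := ⟪e, u⟫_ℝ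
  set v := u - a • e
  have hev : ⟪e, v⟫_ℝ = 0 := inner_sub_inner_smul_eq_zero he u
  have hρ2 : ‖u‖ ^ 2 = ‖v‖ ^ 2 + a ^ 2 := by rw [norm_sub_inner_smul_sq he]; ring
  obtain ⟨hα, ht⟩ := rotated_coords_pos hs hc hsc (norm_nonneg v) hρ2 h1 (by linarith)
  have hr : 0 < ‖v‖ := by
    by_contra! hr
    nlinarith [mul_pos hc hα, mul_pos hs ht]
  have heb : ⟪e, b⟫_ℝ = c := by
    rw [hb, inner_add_right, real_inner_smul_right, real_inner_smul_right, hev,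
      real_inner_self_eq_norm_sq, he]
    ring
  have hub : ⟪u, b⟫_ℝ = s * ‖v‖ + c * a := by
    have huv : ⟪u, v⟫_ℝ = ‖v‖ ^ 2 := by
      rw [show u = v + a • e by simp [v], inner_add_left, real_inner_smul_left, real_inner_comm,
        hev, real_inner_self_eq_norm_sq]
      ring
    rw [hb, inner_add_right, real_inner_smul_right, real_inner_smul_right, huv,
      show ⟪u, e⟫_ℝ = a from real_inner_comm e u]
    field_simp
  have hbb : ‖b‖ ^ 2 = 1 := by
    have hsv : ‖(s / ‖v‖) • v‖ = s := by
      rw [norm_smul, Real.norm_eq_abs, abs_of_pos (div_pos hs hr)]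
      field_simp
    rw [hb, norm_add_sq_real, hsv, real_inner_smul_left, real_inner_smul_right,
      real_inner_comm, hev, norm_smul, he, Real.norm_eq_abs, abs_of_pos hc]
    linear_combination hsc
  rw [hub]
  set t := s * ‖v‖ + c * a
  have hbn : ‖b‖ = 1 := by nlinarith [norm_nonneg b]
  have hres : ‖u - t • b‖ = c * ‖v‖ - s * a := by
    refine (pow_left_inj₀ (norm_nonneg _) hα.le two_ne_zero).mp ?_
    rw [norm_sub_sq_real, real_inner_smul_right, hub, norm_smul, Real.norm_eq_abs, abs_of_pos ht,
      hbn, hρ2]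
    linear_combination (-(‖v‖ ^ 2 + a ^ 2)) * hsc
  refine isEuclideanProj_of_inner_eq_zero_of_inner_nonpos ?_ ?_ fun y hy => ?_
  · change c * ‖t • b‖ ≤ ⟪e, t • b⟫_ℝ
    rw [norm_smul, real_inner_smul_right, heb, hbn, Real.norm_eq_abs, abs_of_pos ht]
    linarith
  · rw [inner_sub_left, real_inner_smul_right, real_inner_smul_left, real_inner_smul_right, hub,
      real_inner_self_eq_norm_sq, hbn]
    ring
  · refine inner_nonpos_of_mem_circularCone he hs.le hc.le hsc ?_ hy
    rw [mem_circularCone_neg, hres, inner_sub_right, real_inner_smul_right, heb]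
    linear_combination (-a) * hsc

end

theorem icecream_cone_projection_formula_general
    (lam : ℝ) (hlam : lam ∈ Set.Ioo 0 (Real.pi / 2))
    (u : EuclideanSpace ℝ (Fin 3))
    (ub : EuclideanSpace ℝ (Fin 3))
    (hub0 : ub 0 = Real.sin lam / Real.sqrt ((u 0) ^ 2 + (u 1) ^ 2) * u 0)
    (hub1 : ub 1 = Real.sin lam / Real.sqrt ((u 0) ^ 2 + (u 1) ^ 2) * u 1)
    (hub2 : ub 2 = Real.cos lam) :
    let K : Set (EuclideanSpace ℝ (Fin 3)) := {w | Real.cos lam * ‖w‖ ≤ w 2}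
    (Real.cos lam * ‖u‖ ≤ u 2 → IsEuclideanProj K u u) ∧
    (Real.sin lam * ‖u‖ ≤ -(u 2) → IsEuclideanProj K u 0) ∧
    (¬(Real.cos lam * ‖u‖ ≤ u 2) → ¬(Real.sin lam * ‖u‖ ≤ -(u 2)) →
      IsEuclideanProj K u (⟪u, ub⟫_ℝ • ub)) := by
  intro K
  have hs : 0 < Real.sin lam :=
    Real.sin_pos_of_pos_of_lt_pi hlam.1 (by linarith [Real.pi_pos, hlam.2])
  have hc : 0 < Real.cos lam := Real.cos_pos_of_mem_Ioo ⟨by linarith [Real.pi_pos, hlam.1], hlam.2⟩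
  have hsc := Real.sin_sq_add_cos_sq lam
  set e : EuclideanSpace ℝ (Fin 3) := EuclideanSpace.single 2 1
  have he : ‖e‖ = 1 := by simp [e]
  have hcoord (w : EuclideanSpace ℝ (Fin 3)) : ⟪e, w⟫_ℝ = w 2 := by
    simp [e, EuclideanSpace.inner_single_left]
  have hK : K = circularCone e (Real.cos lam) := by simp only [K, circularCone, hcoord]
  have hpolar {w : EuclideanSpace ℝ (Fin 3)} :
      w ∈ circularCone (-e) (Real.sin lam) ↔ Real.sin lam * ‖w‖ ≤ -(w 2) := by
    rw [mem_circularCone_neg, hcoord]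
  have hnorm : ‖u - ⟪e, u⟫_ℝ • e‖ = Real.sqrt ((u 0) ^ 2 + (u 1) ^ 2) := by
    simp [EuclideanSpace.norm_eq, Fin.sum_univ_three, hcoord, e]
  have hub :
      ub = (Real.sin lam / ‖u - ⟪e, u⟫_ℝ • e‖) • (u - ⟪e, u⟫_ℝ • e) + Real.cos lam • e := by
    rw [hnorm]
    ext i; fin_cases i <;> simp [hub0, hub1, hub2, hcoord, e]
  refine ⟨fun h => IsEuclideanProj.of_mem h, fun h => ?_, fun h1 h2 => ?_⟩ <;> rw [hK]
  · exact isEuclideanProj_circularCone_zero he hs.le hc.le hsc (hpolar.mpr h)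
  · exact isEuclideanProj_circularCone_of_not_mem he hs hc hsc (by rwa [← hK]) (hpolar.not.mpr h2)
      hub

/-- Explicit projection formula onto the icecream cone
`K = {u : cos λ ‖u‖ ≤ u₃}` in `ℝ³`, for `u` with `(u₁, u₂) ≠ (0,0)`. -/
theorem icecream_cone_projection_formula
    (lam : ℝ) (hlam : lam ∈ Set.Ioo 0 (Real.pi / 2))
    (u : EuclideanSpace ℝ (Fin 3)) (hu12 : ¬(u 0 = 0 ∧ u 1 = 0))
    (ub : EuclideanSpace ℝ (Fin 3))
    (hub0 : ub 0 = Real.sin lam / Real.sqrt ((u 0) ^ 2 + (u 1) ^ 2) * u 0)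
    (hub1 : ub 1 = Real.sin lam / Real.sqrt ((u 0) ^ 2 + (u 1) ^ 2) * u 1)
    (hub2 : ub 2 = Real.cos lam) :
    let K : Set (EuclideanSpace ℝ (Fin 3)) := {w | Real.cos lam * ‖w‖ ≤ w 2}
    (Real.cos lam * ‖u‖ ≤ u 2 → IsEuclideanProj K u u) ∧
    (Real.sin lam * ‖u‖ ≤ -(u 2) → IsEuclideanProj K u 0) ∧
    (¬(Real.cos lam * ‖u‖ ≤ u 2) → ¬(Real.sin lam * ‖u‖ ≤ -(u 2)) →
      IsEuclideanProj K u (⟪u, ub⟫_ℝ • ub)) :=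
  icecream_cone_projection_formula_general lam hlam u ub hub0 hub1 hub2
end
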